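/- Suppose for all t ≥ 1 and all i, j: |[Q(t−1:s+1)]_{ij} − φ_i(t−1)| ≤ C λ^{t−s−2} for 0 ≤ s ≤ t−1, |φ_i(t−1) − (1/m)Σ_{r=1}^m [Q(t−1:0)]_{ir}| ≤ C λ^{t−1}, Σ_{r=1}^m [Q(t−1:0)]_{ir} ≥ δ > 0, and ‖g_j(s)‖_* ≤ L. Then with z_i(t)/w_i(t) and z̄(t) as in the push-sum dual averaging algorithm, for all t ≥ 1: ‖z_i(t)/w_i(t) − z̄(t)‖_* ≤ (mCL/((1−λ)λ) + m C t* λ^{t*−1} L)/δ, where t* = argmax_{t≥1} t λ^{t−1}. -/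

import Mathlib

/-- network error bound for push-sum dual averaging.  `QP a b i j`
denotes the entry `[Q(a:b)]_{ij}` of the state transition matrix, `φ` is a
stochastic vector sequence, `z_i(t)` and `w_i(t)` are the unrolled push-sum
variables, and `z̄(t)` the average cumulated gradient. -/
theorem stmt12 {dd : ℕ} (m : ℕ) (hm : 1 ≤ m) (τ : ℕ)
    (C L δ lam : ℝ) (hC : 0 < C) (hL : 0 < L) (hδ : 0 < δ)
    (hlam : lam ∈ Set.Ioo (0 : ℝ) 1)
    (tstar : ℕ) (htstar1 : 1 ≤ tstar)
    (htstar : ∀ t : ℕ, 1 ≤ t → (t : ℝ) * lam ^ (t - 1) ≤ (tstar : ℝ) * lam ^ (tstar - 1))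
    (QP : ℕ → ℕ → ℕ → ℕ → ℝ) (φ : ℕ → ℕ → ℝ)
    (g : ℕ → ℕ → EuclideanSpace ℝ (Fin dd))
    (hg : ∀ j s, j < m → ‖g j s‖ ≤ L)
    (hQ1 : ∀ t, 1 ≤ t → ∀ i j, ∀ s, s ≤ t - 1 →
      |QP (t - 1) (s + 1) i j - φ i (t - 1)| ≤ C * lam ^ ((t : ℤ) - (s : ℤ) - 2))
    (hQ2 : ∀ t, 1 ≤ t → ∀ i,
      |φ i (t - 1) - (1 / (m : ℝ)) * ∑ r ∈ Finset.range m, QP (t - 1) 0 i r| ≤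
        C * lam ^ (t - 1))
    (hw : ∀ t, 1 ≤ t → ∀ i, δ ≤ ∑ r ∈ Finset.range m, QP (t - 1) 0 i r)
    (z : ℕ → ℕ → EuclideanSpace ℝ (Fin dd))
    (w : ℕ → ℕ → ℝ)
    (zbar : ℕ → EuclideanSpace ℝ (Fin dd))
    (hz : ∀ t i, z t i =
      ∑ s ∈ Finset.range t, ∑ j ∈ Finset.range m, QP (t - 1) (s + 1) i j • g j s)
    (hwdef : ∀ t i, w t i = ∑ r ∈ Finset.range m, QP (t - 1) 0 i r)
    (hzbar : ∀ t, zbar t =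
      (1 / (m : ℝ)) • ∑ s ∈ Finset.range t, ∑ j ∈ Finset.range m, g j s) :
    ∀ t, 1 ≤ t → ∀ i, i < m →
      ‖(w t i)⁻¹ • z t i - zbar t‖ ≤
        (m * C * L / ((1 - lam) * lam) +
          m * C * (tstar : ℝ) * lam ^ (tstar - 1) * L) / δ := by

  intro t ht i hi
  obtain ⟨hlam0, hlam1⟩ := hlam
  have hm0 : (0:ℝ) < m := by exact_mod_cast hm
  have hlne : lam ≠ 0 := ne_of_gt hlam0
  have h1l : (0:ℝ) < 1 - lam := by linarith
  have hW : δ ≤ w t i := by rw [hwdef]; exact hw t ht i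
  have hW0 : 0 < w t i := lt_of_lt_of_le hδ hW
  have hkey : (w t i)⁻¹ • z t i - zbar t = (w t i)⁻¹ • (z t i - (w t i) • zbar t) := by
    rw [smul_sub, smul_smul, inv_mul_cancel₀ hW0.ne', one_smul]
  rw [hkey]
  have hdiff : z t i - (w t i) • zbar t =
      ∑ s ∈ Finset.range t, ∑ j ∈ Finset.range m,
        (QP (t-1) (s+1) i j - (w t i) / m) • g j s := by
    rw [hz, hzbar, smul_smul, mul_one_div, Finset.smul_sum, ← Finset.sum_sub_distrib]
    refine Finset.sum_congr rfl fun s _ => ?_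
    rw [Finset.smul_sum, ← Finset.sum_sub_distrib]
    refine Finset.sum_congr rfl fun j _ => ?_
    rw [sub_smul]
  rw [hdiff]
  have hc : ∀ s ∈ Finset.range t, ∀ j,
      |QP (t-1) (s+1) i j - (w t i) / m| ≤ C * lam⁻¹ * lam ^ (t-1-s) + C * lam ^ (t-1) := by
    intro s hs j
    have hst : s ≤ t - 1 := by
      have := Finset.mem_range.mp hs; omega
    have h1 := hQ1 t ht i j s hst
    have h2 := hQ2 t ht i
    have hwm : (w t i)/m = (1/(m:ℝ)) * ∑ r ∈ Finset.range m, QP (t-1) 0 i r := by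
      rw [hwdef]; ring
    have hzp : lam ^ ((t:ℤ) - s - 2) = lam⁻¹ * lam ^ (t-1-s) := by
      have hcast : (t:ℤ) - s - 2 = ((t-1-s : ℕ) : ℤ) - 1 := by omega
      rw [hcast, zpow_sub_one₀ hlne, zpow_natCast, mul_comm]
    calc |QP (t-1) (s+1) i j - (w t i)/m|
        ≤ |QP (t-1) (s+1) i j - φ i (t-1)| + |φ i (t-1) - (w t i)/m| := abs_sub_le _ _ _
      _ ≤ C * lam ^ ((t:ℤ) - s - 2) + C * lam ^ (t-1) := by
          rw [hwm]; exact add_le_add h1 h2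
      _ = C * lam⁻¹ * lam ^ (t-1-s) + C * lam ^ (t-1) := by rw [hzp]; ring
  have geom : ∑ s ∈ Finset.range t, lam ^ (t-1-s) ≤ 1/(1-lam) := by
    have hre : ∑ s ∈ Finset.range t, lam ^ (t-1-s) = ∑ k ∈ Finset.range t, lam ^ k :=
      Finset.sum_range_reflect (fun k => lam ^ k) t
    rw [hre, geom_sum_eq hlam1.ne t]
    have heq : (lam ^ t - 1)/(lam - 1) = (1 - lam ^ t)/(1 - lam) := by
      rw [div_eq_div_iff (by linarith) (by linarith)]; ring
    rw [heq, div_le_div_iff₀ h1l h1l]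
    nlinarith [pow_nonneg hlam0.le t]
  have hNB : ‖∑ s ∈ Finset.range t, ∑ j ∈ Finset.range m,
      (QP (t-1) (s+1) i j - (w t i) / m) • g j s‖ ≤
      m * C * L / ((1 - lam) * lam) + m * C * (tstar : ℝ) * lam ^ (tstar - 1) * L := by
    calc ‖∑ s ∈ Finset.range t, ∑ j ∈ Finset.range m,
        (QP (t-1) (s+1) i j - (w t i) / m) • g j s‖
        ≤ ∑ s ∈ Finset.range t, ∑ j ∈ Finset.range m,
            (C * lam⁻¹ * lam ^ (t-1-s) + C * lam ^ (t-1)) * L := by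
          refine (norm_sum_le _ _).trans (Finset.sum_le_sum fun s hs => ?_)
          refine (norm_sum_le _ _).trans (Finset.sum_le_sum fun j hj => ?_)
          rw [norm_smul, Real.norm_eq_abs]
          refine mul_le_mul (hc s hs j) (hg j s (Finset.mem_range.mp hj))
            (norm_nonneg _) ?_
          positivity
      _ = (m * L * C * lam⁻¹) * (∑ s ∈ Finset.range t, lam ^ (t-1-s)) +
            (m * C * L) * ((t:ℝ) * lam ^ (t-1)) := by
          simp only [Finset.sum_const, Finset.card_range, nsmul_eq_mul]
          rw [Finset.mul_sum,
            show ((m:ℝ) * C * L) * ((t:ℝ) * lam ^ (t-1)) =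
              ∑ _s ∈ Finset.range t, (m:ℝ) * C * L * lam ^ (t-1) by
              rw [Finset.sum_const, Finset.card_range, nsmul_eq_mul]; ring,
            ← Finset.sum_add_distrib]
          exact Finset.sum_congr rfl fun s _ => by ring
      _ ≤ (m * L * C * lam⁻¹) * (1/(1-lam)) +
            (m * C * L) * ((tstar:ℝ) * lam ^ (tstar-1)) := by
          have hmul : (0:ℝ) ≤ m * L * C * lam⁻¹ := by positivity
          have hmul2 : (0:ℝ) ≤ m * C * L := by positivity
          exact add_le_add (mul_le_mul_of_nonneg_left geom hmul)
            (mul_le_mul_of_nonneg_left (htstar t ht) hmul2)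
      _ = m * C * L / ((1 - lam) * lam) + m * C * (tstar : ℝ) * lam ^ (tstar - 1) * L := by
          field_simp
  rw [norm_smul, Real.norm_eq_abs, abs_of_pos (inv_pos.mpr hW0)]
  have hB0 : (0:ℝ) ≤ m * C * L / ((1 - lam) * lam) +
      m * C * (tstar : ℝ) * lam ^ (tstar - 1) * L := by positivity
  calc (w t i)⁻¹ * ‖∑ s ∈ Finset.range t, ∑ j ∈ Finset.range m,
        (QP (t-1) (s+1) i j - (w t i) / m) • g j s‖
      ≤ δ⁻¹ * (m * C * L / ((1 - lam) * lam) +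
          m * C * (tstar : ℝ) * lam ^ (tstar - 1) * L) := by
        exact mul_le_mul (inv_anti₀ hδ hW) hNB (norm_nonneg _) (inv_nonneg.mpr hδ.le)
    _ = (m * C * L / ((1 - lam) * lam) +
          m * C * (tstar : ℝ) * lam ^ (tstar - 1) * L) / δ := by
        rw [inv_mul_eq_div]
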